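/- For every odd prime p, the sequence (f(p^e - 1))_{e ≥ 0} is a Cauchy sequence in ℚ_p, and its limit is congruent to 1 modulo p (i.e., each f(p^e - 1) satisfies ν_p(f(p^e-1) - 1) ≥ 1). -/

import Mathlib

/-!
Pairing the terms `1/C(n+1,k)` and `1/C(n+1,k+1)` gives the recurrence
`f (n+1) = 1 + (n+2)/(2(n+1)) f n`, which unrolls to `f (N-1) = ∑_{j<N} N / ((N-j) 2^j)`.
For `N = p^e` and `0 < j < N` the `j`-th term has `p`-adic norm `‖p^e‖ / ‖j‖ ≤ ‖p‖`,
so `f (p^e-1) ≡ 1 mod p`. Passing from `p^e` to `p^(e+1)`, the new terms with `p ∤ j` have norm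
`‖p^(e+1)‖`, and the term at `j = p i` is the old term at `i` divided by `2^((p-1) i)`;
since `2^((p-1) i) ≡ 1 mod p i` (Fermat, then lifting the exponent), consecutive values
differ by at most `‖p‖^(e+1)`.
-/

def f (n : ℕ) : ℚ := ∑ k ∈ Finset.range (n + 1), ((n.choose k : ℚ))⁻¹

open Finset

lemma inv_choose_succ_add_inv_choose_succ_succ {n k : ℕ} (hk : k ≤ n) :
    ((n + 1).choose k : ℚ)⁻¹ + ((n + 1).choose (k + 1) : ℚ)⁻¹ =
      (n + 2) / (n + 1) * (n.choose k : ℚ)⁻¹ := by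
  have hc : (n.choose k : ℚ) ≠ 0 := mod_cast (Nat.choose_pos hk).ne'
  have ha : ((n + 1).choose k : ℚ) ≠ 0 := mod_cast (Nat.choose_pos (by omega)).ne'
  have hb : ((n + 1).choose (k + 1) : ℚ) ≠ 0 := mod_cast (Nat.choose_pos (by omega)).ne'
  have eb : ((n + 1 : ℕ) : ℚ) * n.choose k = (n + 1).choose (k + 1) * (k + 1 : ℕ) :=
    mod_cast Nat.add_one_mul_choose_eq n k
  have ea : (n.choose k : ℚ) * (n + 1 : ℕ) = (n + 1).choose k * (n + 1 - k : ℕ) :=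
    mod_cast Nat.choose_mul_succ_eq n k
  rw [Nat.cast_sub (by omega)] at ea
  push_cast at ea eb
  field_simp
  linear_combination ((n + 1).choose (k + 1) : ℚ) * ea + ((n + 1).choose k : ℚ) * eb

lemma f_succ (n : ℕ) : f (n + 1) = 1 + (n + 2) / (2 * (n + 1)) * f n := by
  have hsum : ∑ k ∈ range (n + 1),
      (((n + 1).choose k : ℚ)⁻¹ + ((n + 1).choose (k + 1) : ℚ)⁻¹) = (n + 2) / (n + 1) * f n := by
    rw [f, mul_sum]
    exact sum_congr rfl fun k hk =>
      inv_choose_succ_add_inv_choose_succ_succ (Nat.lt_succ_iff.mp (mem_range.mp hk))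
  have hlow : ∑ k ∈ range (n + 1), ((n + 1).choose k : ℚ)⁻¹ = f (n + 1) - 1 := by
    simp [f, sum_range_succ _ (n + 1)]
  have hhigh : ∑ k ∈ range (n + 1), ((n + 1).choose (k + 1) : ℚ)⁻¹ = f (n + 1) - 1 := by
    simp [f, sum_range_succ' _ (n + 1)]
  rw [sum_add_distrib, hlow, hhigh] at hsum
  have hn : (n + 1 : ℚ) ≠ 0 := by positivity
  field_simp at hsum ⊢
  linear_combination hsum

def fSummand {K : Type*} [Field K] (N j : ℕ) : K := N / ((N - j) * 2 ^ j)

section CharZero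

variable {K : Type*} [Field K] [CharZero K]

lemma fSummand_zero {N : ℕ} (hN : N ≠ 0) : (fSummand N 0 : K) = 1 := by
  simp [fSummand, hN]

lemma fSummand_succ_succ (N j : ℕ) :
    (fSummand (N + 2) (j + 1) : K) = (N + 2) / (2 * (N + 1)) * fSummand (N + 1) j := by
  have hN : (N + 1 : K) ≠ 0 := by exact_mod_cast N.succ_ne_zero
  simp only [fSummand]
  push_cast
  rw [show (N + 2 - (j + 1) : K) = N + 1 - j by ring, pow_succ]
  by_cases hj : (N + 1 - j : K) = 0
  · simp [hj]
  · field_simp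

lemma fSummand_mul_mul {q : ℕ} (hq : q ≠ 0) (N i : ℕ) :
    (fSummand (q * N) (q * i) : K) = fSummand N i / 2 ^ ((q - 1) * i) := by
  have hq' : (q : K) ≠ 0 := by exact_mod_cast hq
  have h2 : (2 : K) ^ (q * i) = 2 ^ ((q - 1) * i) * 2 ^ i := by
    rw [← pow_add]; congr 1; cases q <;> simp_all [Nat.succ_mul]
  simp only [fSummand]
  push_cast
  rw [h2, ← mul_sub]
  by_cases hi : (N - i : K) = 0
  · simp [hi]
  · field_simp

end CharZero

lemma f_eq_sum_fSummand (n : ℕ) : f n = ∑ j ∈ range (n + 1), fSummand (n + 1) j := by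
  induction n with
  | zero => simp [f, fSummand]
  | succ n ih =>
    rw [f_succ, ih, sum_range_succ' _ (n + 1), fSummand_zero (n + 1).succ_ne_zero, mul_sum,
      add_comm]
    congr 1
    refine sum_congr rfl fun j _ => ?_
    rw [fSummand_succ_succ]

lemma ratCast_f_pred {K : Type*} [Field K] [CharZero K] {N : ℕ} (hN : N ≠ 0) :
    ((f (N - 1) : ℚ) : K) = ∑ j ∈ range N, fSummand N j := by
  obtain ⟨n, rfl⟩ := Nat.exists_eq_succ_of_ne_zero hN
  simp [f_eq_sum_fSummand, fSummand]

lemma sum_range_mul_eq_add_sum_filter_not_dvd {M : Type*} [AddCommMonoid M] (g : ℕ → M)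
    {q : ℕ} (hq : q ≠ 0) (n : ℕ) :
    ∑ j ∈ range (q * n), g j =
      ∑ i ∈ range n, g (q * i) + ∑ j ∈ range (q * n) with ¬ q ∣ j, g j := by
  have himage : (range (q * n)).filter (q ∣ ·) = (range n).image (q * ·) := by
    ext j
    simp only [mem_filter, mem_range, mem_image]
    constructor
    · rintro ⟨hj, i, rfl⟩
      exact ⟨i, Nat.lt_of_mul_lt_mul_left hj, rfl⟩
    · rintro ⟨i, hi, rfl⟩
      exact ⟨Nat.mul_lt_mul_of_pos_left hi (Nat.pos_of_ne_zero hq), dvd_mul_right q i⟩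
  rw [← sum_filter_add_sum_filter_not (range (q * n)) (q ∣ ·), himage,
    sum_image fun a _ b _ h => Nat.eq_of_mul_eq_mul_left (Nat.pos_of_ne_zero hq) h]

namespace Padic

variable {p : ℕ} [hp : Fact p.Prime]

lemma norm_two_eq_one (hp2 : p ≠ 2) : ‖(2 : ℚ_[p])‖ = 1 := by
  simpa using norm_natCast_eq_one_iff.mpr ((Nat.coprime_primes hp.out Nat.prime_two).mpr hp2)

lemma norm_sub_eq_of_norm_lt {x y : ℚ_[p]} (h : ‖x‖ < ‖y‖) : ‖x - y‖ = ‖y‖ := by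
  rw [sub_eq_add_neg, IsUltrametricDist.norm_add_eq_max_of_norm_ne_norm (by simpa using h.ne),
    norm_neg, max_eq_right (by simpa using h.le)]

lemma norm_p_pow_le_norm_natCast {m j : ℕ} (hj0 : j ≠ 0) (hj : j < p ^ (m + 1)) :
    ‖(p : ℚ_[p]) ^ m‖ ≤ ‖(j : ℚ_[p])‖ := by
  by_contra! h
  rw [norm_p_pow, norm_lt_pow_iff_norm_le_pow_sub_one, show (-m - 1 : ℤ) = -(m + 1 : ℕ) by
    push_cast; ring] at h
  have hdvd := (norm_int_le_pow_iff_dvd (p := p) j (m + 1)).mp (by simpa using h)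
  exact absurd (Nat.le_of_dvd (Nat.pos_of_ne_zero hj0) (mod_cast hdvd)) (not_le.mpr hj)

lemma norm_p_pow_sub_natCast {e j : ℕ} (hj0 : j ≠ 0) (hj : j < p ^ e) :
    ‖(p : ℚ_[p]) ^ e - j‖ = ‖(j : ℚ_[p])‖ := by
  obtain ⟨m, rfl⟩ : ∃ m, e = m + 1 := Nat.exists_eq_succ_of_ne_zero (by rintro rfl; simp_all)
  refine norm_sub_eq_of_norm_lt (lt_of_lt_of_le ?_ (norm_p_pow_le_norm_natCast hj0 hj))
  rw [pow_succ, norm_mul, norm_p]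
  exact mul_lt_of_lt_one_right (by simp [hp.out.pos])
    (inv_lt_one_of_one_lt₀ (mod_cast hp.out.one_lt))

lemma norm_intCast_pow_sub_one_le {a : ℤ} (ha : ‖(a : ℚ_[p])‖ = 1) (j : ℕ) :
    ‖(a : ℚ_[p]) ^ ((p - 1) * j) - 1‖ ≤ ‖(p * j : ℚ_[p])‖ := by
  rcases eq_or_ne j 0 with rfl | hj
  · simp
  obtain ⟨t, u, hu, rfl⟩ := Nat.exists_eq_pow_mul_and_not_dvd hj p hp.out.ne_one
  have hfermat : (p : ℤ) ∣ (a ^ (p - 1)) ^ u - 1 := by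
    simpa only [one_pow] using
      ((Int.ModEq.pow_card_sub_one_eq_one hp.out (norm_intCast_eq_one_iff.mp ha)).pow u).symm.dvd
  have hdvd := dvd_sub_pow_of_dvd_sub (a := (a ^ (p - 1)) ^ u) (b := 1) hfermat t
  rw [one_pow, ← pow_mul, ← pow_mul] at hdvd
  have hnorm := (norm_int_le_pow_iff_dvd (p := p) _ (t + 1)).mpr hdvd
  have hu1 : ‖(u : ℚ_[p])‖ = 1 := norm_natCast_eq_one_iff.mpr
    ((Nat.Prime.coprime_iff_not_dvd hp.out).mpr hu)
  push_cast at hnorm ⊢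
  rw [norm_mul, norm_mul, hu1, mul_one, ← norm_mul, ← pow_succ', norm_p_pow, mul_comm (p ^ t)]
  convert hnorm using 3
  push_cast; ring

lemma norm_fSummand_p_pow (hp2 : p ≠ 2) {e j : ℕ} (hj0 : j ≠ 0) (hj : j < p ^ e) :
    ‖(fSummand (p ^ e) j : ℚ_[p])‖ = ‖(p : ℚ_[p]) ^ e‖ / ‖(j : ℚ_[p])‖ := by
  simp only [fSummand]
  push_cast
  rw [norm_div, norm_mul, norm_p_pow_sub_natCast hj0 hj, norm_pow (2 : ℚ_[p]), norm_two_eq_one hp2,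
    one_pow, mul_one]

lemma norm_fSummand_p_pow_le (hp2 : p ≠ 2) {e j : ℕ} (hj0 : j ≠ 0) (hj : j < p ^ e) :
    ‖(fSummand (p ^ e) j : ℚ_[p])‖ ≤ ‖(p : ℚ_[p])‖ := by
  obtain ⟨m, rfl⟩ : ∃ m, e = m + 1 := Nat.exists_eq_succ_of_ne_zero (by rintro rfl; simp_all)
  rw [norm_fSummand_p_pow hp2 hj0 hj, div_le_iff₀ (by simpa using hj0), pow_succ', norm_mul]
  gcongr
  exact norm_p_pow_le_norm_natCast hj0 hj

lemma norm_fSummand_of_dvd_of_not_dvd (hp2 : p ≠ 2) {N j : ℕ} (hN : p ∣ N) (hj : ¬ p ∣ j) :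
    ‖(fSummand N j : ℚ_[p])‖ = ‖(N : ℚ_[p])‖ := by
  have hj1 : ‖(j : ℚ_[p])‖ = 1 :=
    norm_natCast_eq_one_iff.mpr ((Nat.Prime.coprime_iff_not_dvd hp.out).mpr hj)
  have hNj : ‖(N - j : ℚ_[p])‖ = 1 := by
    rw [norm_sub_eq_of_norm_lt (by simpa [hj1] using hN), hj1]
  rw [fSummand, norm_div, norm_mul, hNj, norm_pow, norm_two_eq_one hp2]
  simp

lemma norm_fSummand_mul_sub_le (hp2 : p ≠ 2) {e i : ℕ} (hi : i < p ^ e) :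
    ‖(fSummand (p * p ^ e) (p * i) - fSummand (p ^ e) i : ℚ_[p])‖ ≤ ‖(p : ℚ_[p]) ^ (e + 1)‖ := by
  rcases eq_or_ne i 0 with rfl | hi0
  · have hpe : p ^ e ≠ 0 := pow_ne_zero e hp.out.ne_zero
    rw [mul_zero, fSummand_zero hpe, fSummand_zero (mul_ne_zero hp.out.ne_zero hpe), sub_self,
      norm_zero]
    exact norm_nonneg _
  set k := (p - 1) * i
  have h2k : ‖(2 : ℚ_[p]) ^ k‖ = 1 := by rw [norm_pow, norm_two_eq_one hp2, one_pow]
  have hdiff : (fSummand (p * p ^ e) (p * i) - fSummand (p ^ e) i : ℚ_[p]) =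
      -(fSummand (p ^ e) i * (2 ^ k - 1)) / 2 ^ k := by
    rw [fSummand_mul_mul hp.out.ne_zero]
    field_simp
    ring
  have hnum : ‖(2 : ℚ_[p]) ^ k - 1‖ ≤ ‖(p * i : ℚ_[p])‖ := by
    simpa using norm_intCast_pow_sub_one_le (p := p) (a := 2) (by simpa using norm_two_eq_one hp2) i
  have hi' : ‖(i : ℚ_[p])‖ ≠ 0 := by simpa using hi0
  calc ‖(fSummand (p * p ^ e) (p * i) - fSummand (p ^ e) i : ℚ_[p])‖
      = ‖(p : ℚ_[p]) ^ e‖ / ‖(i : ℚ_[p])‖ * ‖(2 : ℚ_[p]) ^ k - 1‖ := by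
        rw [hdiff, norm_div, norm_neg, norm_mul, h2k, div_one, norm_fSummand_p_pow hp2 hi0 hi]
    _ ≤ ‖(p : ℚ_[p]) ^ e‖ / ‖(i : ℚ_[p])‖ * ‖(p * i : ℚ_[p])‖ := by gcongr
    _ = ‖(p : ℚ_[p]) ^ (e + 1)‖ := by
        rw [norm_mul, pow_succ, norm_mul]
        field_simp

lemma norm_sum_fSummand_p_pow_succ_sub_le (hp2 : p ≠ 2) (e : ℕ) :
    ‖∑ j ∈ range (p ^ (e + 1)), (fSummand (p ^ (e + 1)) j : ℚ_[p]) -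
      ∑ i ∈ range (p ^ e), fSummand (p ^ e) i‖ ≤ ‖(p : ℚ_[p]) ^ (e + 1)‖ := by
  rw [pow_succ' p e, sum_range_mul_eq_add_sum_filter_not_dvd _ hp.out.ne_zero, add_sub_right_comm,
    ← sum_sub_distrib]
  refine (IsUltrametricDist.norm_add_le_max _ _).trans (max_le ?_ ?_) <;>
    refine IsUltrametricDist.norm_sum_le_of_forall_le_of_nonneg (norm_nonneg _) fun j hj => ?_
  · exact norm_fSummand_mul_sub_le hp2 (mem_range.mp hj)
  · rw [norm_fSummand_of_dvd_of_not_dvd hp2 (dvd_mul_right p _) (mem_filter.mp hj).2, ← pow_succ']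
    simp

lemma norm_sum_fSummand_p_pow_sub_one_le (hp2 : p ≠ 2) (e : ℕ) :
    ‖∑ j ∈ range (p ^ e), (fSummand (p ^ e) j : ℚ_[p]) - 1‖ ≤ ‖(p : ℚ_[p])‖ := by
  have hpe : p ^ e ≠ 0 := pow_ne_zero e hp.out.ne_zero
  rw [range_eq_Ico, sum_eq_sum_Ico_succ_bot (Nat.pos_of_ne_zero hpe), fSummand_zero hpe,
    add_sub_cancel_left]
  refine IsUltrametricDist.norm_sum_le_of_forall_le_of_nonneg (norm_nonneg _) fun j hj => ?_
  rw [mem_Ico] at hj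
  exact norm_fSummand_p_pow_le hp2 (by omega) hj.2

lemma one_le_padicValRat_of_norm_le {q : ℚ} (hq : q ≠ 0) (h : ‖(q : ℚ_[p])‖ ≤ ‖(p : ℚ_[p])‖) :
    1 ≤ padicValRat p q := by
  rw [norm_eq_zpow_neg_valuation (by exact_mod_cast hq), valuation_ratCast, norm_p,
    ← zpow_neg_one, zpow_le_zpow_iff_right₀ (mod_cast hp.out.one_lt)] at h
  omega

end Padic

theorem stmt_14 (p : ℕ) [hp : Fact p.Prime] (hodd : Odd p) :
    CauchySeq (fun e : ℕ => ((f (p ^ e - 1) : ℚ) : ℚ_[p])) ∧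
    ∀ e : ℕ, f (p ^ e - 1) - 1 = 0 ∨ 1 ≤ padicValRat p (f (p ^ e - 1) - 1) := by
  have hp2 : p ≠ 2 := by rintro rfl; norm_num at hodd
  have hpe (e : ℕ) : p ^ e ≠ 0 := pow_ne_zero e hp.out.ne_zero
  refine ⟨cauchySeq_of_le_geometric ‖(p : ℚ_[p])‖ 1 Padic.norm_p_lt_one fun e => ?_, fun e => ?_⟩
  · rw [dist_comm, dist_eq_norm, ratCast_f_pred (hpe _), ratCast_f_pred (hpe _), one_mul]
    refine (Padic.norm_sum_fSummand_p_pow_succ_sub_le hp2 e).trans ?_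
    rw [norm_pow]
    exact pow_le_pow_of_le_one (norm_nonneg _) Padic.norm_p_lt_one.le e.le_succ
  refine or_iff_not_imp_left.mpr fun hne => Padic.one_le_padicValRat_of_norm_le hne ?_
  rw [Rat.cast_sub, Rat.cast_one, ratCast_f_pred (hpe e)]
  exact Padic.norm_sum_fSummand_p_pow_sub_one_le hp2 e
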